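/- Let E and V_n (n ∈ ℕ) be selective ultrafilters on ℕ, let V = E-∑_n V_n, and let B_V = {b ⊆ ℕ×ℕ : π₁(b) ∈ E and b(n) ∈ V_n for every n ∈ π₁(b)}, where π₁(b) = {n : b(n) ≠ ∅}. Then B_V is a base for V witnessing that V is basically generated, and B_V is closed under finite intersections: for all b₀, b₁ ∈ B_V, b₀ ∩ b₁ ∈ B_V. -/

import Mathlib

/-!
A selective ultrafilter contains, for every sequence of its members, a set `Z` diagonalizing
it, and `Z` can moreover be made sparse for any given function (`G m < m'` for `m < m'` in `Z`).
Let `b k → c` in `B_V`. In column `n`, take such a `Z ⊆ c(n)` in `V_n` for the sections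
`b k (n)` and the convergence indices: an index `k` whose section misses a point `m' ∈ Z` then
lies between the neighbours of `m'` in `Z`. Hence two disjoint index sets that are spread out
enough relative to `Z` cannot both miss a `V_n`-large set of points. Diagonalizing at the level
of `E` gives columns `X ∈ E` and an infinite index set `K` spread out for every column of `X`;
of two infinite halves of `K`, one works for `E`-many columns, so its intersection is in `V`.
-/

/-- The `U`-indexed sum of the ultrafilters `V n`: a set `X ⊆ ℕ × ℕ` belongs to the sum
iff `{n | X(n) ∈ V n} ∈ U`, where `X(n)` is the `n`-th vertical section of `X`. -/
def sumUF (U : Ultrafilter ℕ) (V : ℕ → Ultrafilter ℕ) : Ultrafilter (ℕ × ℕ) :=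
  U.bind fun n => (V n).map fun m => (n, m)

/-- `U` is selective: for every `f : ℕ → ℕ` there is `A ∈ U` on which `f` is
one-to-one or constant. -/
def IsSelective (U : Ultrafilter ℕ) : Prop :=
  ∀ f : ℕ → ℕ, ∃ A ∈ U, Set.InjOn f A ∨ ∃ c, ∀ a ∈ A, f a = c

/-- The `n`-th vertical section of `b ⊆ ℕ × ℕ`. -/
def sect (b : Set (ℕ × ℕ)) (n : ℕ) : Set ℕ := {m | (n, m) ∈ b}

/-- Pointwise (product-topology) convergence of a sequence of subsets of `X`,
identifying `𝒫(X)` with `2^X`. -/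
def ConvergesTo {X : Type*} (b : ℕ → Set X) (c : Set X) : Prop :=
  ∀ x : X, ∃ N : ℕ, ∀ n, N ≤ n → (x ∈ b n ↔ x ∈ c)

/-- `B` witnesses that the ultrafilter `U` is basically generated: `B` is a base for `U`
and every sequence from `B` converging (in `2^X`) to a member of `B` has an infinite
subsequence whose intersection is in `U`. -/
def BasicallyGeneratedBy {X : Type*} (U : Ultrafilter X) (B : Set (Set X)) : Prop :=
  (∀ b ∈ B, b ∈ U) ∧
  (∀ a ∈ U, ∃ b ∈ B, b ⊆ a) ∧
  (∀ (b : ℕ → Set X) (c : Set X), (∀ n, b n ∈ B) → c ∈ B → ConvergesTo b c →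
    ∃ M : Set ℕ, M.Infinite ∧ (⋂ n ∈ M, b n) ∈ U)

/-- `B_V = {b ⊆ ℕ×ℕ : π₁(b) ∈ E and b(n) ∈ V_n for every n ∈ π₁(b)}`,
where `π₁(b) = {n : b(n) ≠ ∅}`. -/
def BV (E : Ultrafilter ℕ) (Vn : ℕ → Ultrafilter ℕ) : Set (Set (ℕ × ℕ)) :=
  {b | {n | sect b n ≠ ∅} ∈ E ∧ ∀ n, sect b n ≠ ∅ → sect b n ∈ Vn n}

open Set Filter

theorem mem_sumUF {E : Ultrafilter ℕ} {V : ℕ → Ultrafilter ℕ} {X : Set (ℕ × ℕ)} :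
    X ∈ sumUF E V ↔ {n | sect X n ∈ V n} ∈ E :=
  Iff.rfl

theorem sect_biInter {ι : Type*} (b : ι → Set (ℕ × ℕ)) (M : Set ι) (n : ℕ) :
    sect (⋂ k ∈ M, b k) n = ⋂ k ∈ M, sect (b k) n := by
  ext m
  simp [sect]

theorem ConvergesTo.sect {b : ℕ → Set (ℕ × ℕ)} {c : Set (ℕ × ℕ)} (h : ConvergesTo b c) (n : ℕ) :
    ConvergesTo (fun k => _root_.sect (b k) n) (_root_.sect c n) :=
  fun m => h (n, m)

theorem Ultrafilter.infinite_of_mem_of_le_cofinite {α : Type*} {U : Ultrafilter α}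
    (hU : (U : Filter α) ≤ cofinite) {s : Set α} (hs : s ∈ U) : s.Infinite :=
  fun hf => U.compl_mem_iff_notMem.1 (hU hf.compl_mem_cofinite) hs

theorem Set.Infinite.exists_infinite_sdiff {α : Type*} {s : Set α} (hs : s.Infinite) :
    ∃ t ⊆ s, t.Infinite ∧ (s \ t).Infinite := by
  set e : ℕ → α := fun j => hs.natEmbedding s j
  have he : Function.Injective e := Subtype.val_injective.comp (hs.natEmbedding s).injective
  have hinj (a : ℕ) : Function.Injective fun j => e (2 * j + a) :=
    fun i j h => by have := he h; omega
  refine ⟨range fun j => e (2 * j), range_subset_iff.2 fun j => (hs.natEmbedding s _).2,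
    infinite_range_of_injective (hinj 0), (infinite_range_of_injective (hinj 1)).mono ?_⟩
  rintro _ ⟨j, rfl⟩
  exact ⟨(hs.natEmbedding s _).2, fun ⟨i, hi⟩ => by have := he hi; omega⟩

def SparseAbove (ζ : ℕ → ℕ) (N : ℕ) (S : Set ℕ) : Prop :=
  ∀ k ∈ S, ∀ k' ∈ S, N ≤ k → k < k' → ζ k < k'

theorem exists_infinite_sparseAbove (b : ℕ → ℕ) (N : ℕ) :
    ∃ K : Set ℕ, K.Infinite ∧ K ⊆ Ici N ∧ SparseAbove b 0 K := by
  let ν : ℕ → ℕ := fun i => Nat.rec N (fun _ x => max (b x) x + 1) i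
  have hν_succ (i : ℕ) : ν (i + 1) = max (b (ν i)) (ν i) + 1 := rfl
  have hν : StrictMono ν := strictMono_nat_of_lt_succ fun i => by rw [hν_succ]; omega
  refine ⟨range ν, infinite_range_of_injective hν.injective, ?_, ?_⟩
  · rintro _ ⟨i, rfl⟩
    exact hν.monotone (Nat.zero_le i)
  · rintro _ ⟨i, rfl⟩ _ ⟨j, rfl⟩ - hij
    calc b (ν i) < ν (i + 1) := by rw [hν_succ]; omega
      _ ≤ ν j := hν.monotone (hν.lt_iff_lt.1 hij)

namespace IsSelective

variable {U : Ultrafilter ℕ}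

theorem exists_sparse_of_le_cofinite (hU : IsSelective U) (hcof : (U : Filter ℕ) ≤ cofinite)
    (b : ℕ → ℕ) : ∃ Z ∈ U, ∀ m ∈ Z, ∀ m' ∈ Z, m < m' → b m < m' := by
  -- `b` maps each block `[ν i, ν (i + 1))` below the end of the next block. Selectivity gives a
  -- set in `U` meeting every block at most once, and a parity class keeps its blocks apart.
  let ν : ℕ → ℕ := fun i => Nat.rec 0 (fun _ x => (Finset.range x).sup b + x + 1) i
  have hν_succ (i : ℕ) : ν (i + 1) = (Finset.range (ν i)).sup b + ν i + 1 := rfl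
  have hν : StrictMono ν := strictMono_nat_of_lt_succ fun i => by rw [hν_succ]; omega
  have hbν (i m : ℕ) (hm : m < ν (i + 1)) : b m < ν (i + 2) := by
    have := Finset.le_sup (f := b) (Finset.mem_range.2 hm)
    rw [hν_succ (i + 1)]
    omega
  have hex (m : ℕ) : ∃ i, m < ν (i + 1) := ⟨m, (Nat.lt_succ_self m).trans_le (hν.id_le _)⟩
  let φ : ℕ → ℕ := fun m => Nat.find (hex m)
  have hφ_lt (m : ℕ) : m < ν (φ m + 1) := Nat.find_spec (hex m)
  have hφ_le (m : ℕ) : ν (φ m) ≤ m := by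
    rcases h : φ m with _ | i
    · exact Nat.zero_le m
    · exact not_lt.1 (Nat.find_min (hex m) (show i < φ m by omega))
  have hφ_mono : Monotone φ := fun m m' h => Nat.find_mono fun i hi => h.trans_lt hi
  clear_value φ
  obtain ⟨A, hA, hφA⟩ : ∃ A ∈ U, InjOn φ A := by
    obtain ⟨A, hA, hinj | ⟨i, hi⟩⟩ := hU φ
    · exact ⟨A, hA, hinj⟩
    · refine absurd ((finite_Iio (ν (i + 1))).subset fun m hm => ?_)
        (Ultrafilter.infinite_of_mem_of_le_cofinite hcof hA)
      simpa [← hi m hm] using hφ_lt m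
  obtain ⟨T, hT, hTpar⟩ : ∃ T ∈ U, ∀ m ∈ T, ∀ m' ∈ T, φ m % 2 = φ m' % 2 := by
    rcases U.mem_or_compl_mem {m | φ m % 2 = 0} with h | h
    · exact ⟨_, h, fun m hm m' hm' => hm.trans hm'.symm⟩
    · exact ⟨_, h, fun m hm m' hm' =>
        (Nat.mod_two_ne_zero.1 hm).trans (Nat.mod_two_ne_zero.1 hm').symm⟩
  refine ⟨A ∩ T, inter_mem hA hT, fun m hm m' hm' hlt => ?_⟩
  have hφ2 : φ m + 2 ≤ φ m' := by
    have := hφ_mono hlt.le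
    have := hTpar m hm.2 m' hm'.2
    have : φ m ≠ φ m' := fun h => hlt.ne (hφA hm.1 hm'.1 h)
    omega
  calc b m < ν (φ m + 2) := hbν _ _ (hφ_lt m)
    _ ≤ ν (φ m') := hν.monotone hφ2
    _ ≤ m' := hφ_le m'

theorem exists_diagonal_of_le_cofinite (hU : IsSelective U) (hcof : (U : Filter ℕ) ≤ cofinite)
    {R : ℕ → Set ℕ} (hR : ∀ x, R x ∈ U) (hanti : Antitone R) :
    ∃ Z ∈ U, ∀ m ∈ Z, ∀ m' ∈ Z, m < m' → m' ∈ R m := by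
  classical
  -- Every `m'` leaves `R x ∩ Ioi x` at a finite stage `g m'`; selectivity makes `g`
  -- injective, hence finite-to-one, on a set in `U`.
  have hex (m' : ℕ) : ∃ x, m' ∉ R x ∩ Ioi x := ⟨m', fun h => lt_irrefl m' h.2⟩
  let g : ℕ → ℕ := fun m' => Nat.find (hex m')
  have hg (x m' : ℕ) : m' ∈ R x ∩ Ioi x ↔ x < g m' := by
    refine ⟨fun h => not_le.1 fun hle => Nat.find_spec (hex m') ⟨hanti hle h.1, ?_⟩,
      fun h => not_not.1 (Nat.find_min (hex m') h)⟩
    exact lt_of_le_of_lt hle h.2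
  clear_value g
  have hR' (x : ℕ) : R x ∩ Ioi x ∈ U := by
    refine inter_mem (hR x) ?_
    simpa using hcof (finite_Iic x).compl_mem_cofinite
  obtain ⟨A, hA, hgA⟩ : ∃ A ∈ U, InjOn g A := by
    obtain ⟨A, hA, hinj | ⟨c, hc⟩⟩ := hU g
    · exact ⟨A, hA, hinj⟩
    · obtain ⟨m', hm'A, hm'R⟩ := Filter.nonempty_of_mem (inter_mem hA (hR' c))
      exact absurd ((hg c m').1 hm'R) (by simp [hc m' hm'A])
  have hbound (x : ℕ) : ∃ B, ∀ m' ∈ A, B < m' → x < g m' := by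
    have hfin : (A ∩ g ⁻¹' Iic x).Finite :=
      Finite.of_finite_image ((finite_Iic x).subset (image_subset_iff.2 fun _ h => h.2))
        (hgA.mono inter_subset_left)
    obtain ⟨B, hB⟩ := hfin.bddAbove
    exact ⟨B, fun m' hm' hBm' => not_le.1 fun h => (hB ⟨hm', h⟩).not_gt hBm'⟩
  choose B hB using hbound
  obtain ⟨Z, hZ, hZB⟩ := exists_sparse_of_le_cofinite hU hcof B
  exact ⟨Z ∩ A, inter_mem hZ hA, fun m hm m' hm' hlt =>
    ((hg m m').2 (hB m m' hm'.2 (hZB m hm.1 m' hm'.1 hlt))).1⟩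

theorem exists_diagonal (hU : IsSelective U) {A : ℕ → Set ℕ} (hA : ∀ k, A k ∈ U) (G : ℕ → ℕ) :
    ∃ Z ∈ U, ∀ m ∈ Z, ∀ m' ∈ Z, m < m' → (∀ k ≤ m, m' ∈ A k) ∧ G m < m' := by
  rcases U.le_cofinite_or_eq_pure with hcof | ⟨a, rfl⟩
  · obtain ⟨Z₁, hZ₁, h₁⟩ := exists_diagonal_of_le_cofinite hU hcof (R := fun x => ⋂ k ≤ x, A k)
      (fun x => (biInter_mem (finite_Iic x)).2 fun k _ => hA k)
      (fun x y hxy => biInter_mono (Iic_subset_Iic.2 hxy) fun _ _ => subset_rfl)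
    obtain ⟨Z₂, hZ₂, h₂⟩ := exists_sparse_of_le_cofinite hU hcof G
    exact ⟨Z₁ ∩ Z₂, inter_mem hZ₁ hZ₂, fun m hm m' hm' hlt =>
      ⟨mem_iInter₂.1 (h₁ m hm.1 m' hm'.1 hlt), h₂ m hm.2 m' hm'.2 hlt⟩⟩
  · exact ⟨{a}, rfl, by rintro _ rfl _ rfl h; exact absurd h (lt_irrefl _)⟩

theorem exists_iInter_mem_or_iInter_mem (hU : IsSelective U) {s : ℕ → Set ℕ} {c : Set ℕ}
    (hc : c ∈ U) (hsc : ConvergesTo s c) :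
    ∃ ζ : ℕ → ℕ, ∀ (N : ℕ) (M M' : Set ℕ), Disjoint M M' → SparseAbove ζ N (M ∪ M') →
      (∀ k ∈ M ∪ M', s k ∈ U) → (⋂ k ∈ M, s k) ∈ U ∨ (⋂ k ∈ M', s k) ∈ U := by
  rcases U.le_cofinite_or_eq_pure with hcof | ⟨a, rfl⟩
  swap
  · exact ⟨id, fun _ _ _ _ _ hs => Or.inl (mem_iInter₂.2 fun k hk => hs k (Or.inl hk))⟩
  choose F hF using hsc
  obtain ⟨Z₀, hZ₀, hZ₀diag⟩ := exists_diagonal hU (A := fun k => {m | s k ∈ U → m ∈ s k})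
    (fun k => (em (s k ∈ U)).elim (fun h => mem_of_superset h fun _ hm _ => hm)
      fun h => univ_mem' fun _ h' => absurd h' h) F
  set Z := Z₀ ∩ c
  have hZ : Z ∈ U := inter_mem hZ₀ hc
  have hZinf : Z.Infinite := Ultrafilter.infinite_of_mem_of_le_cofinite hcof hZ
  have hdiag (m : ℕ) (hm : m ∈ Z) (m' : ℕ) (hm' : m' ∈ Z) (hlt : m < m') (k : ℕ) (hk : k ≤ m)
      (hsk : s k ∈ U) : m' ∈ s k :=
    (hZ₀diag m hm.1 m' hm'.1 hlt).1 k hk hsk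
  have hlate (m : ℕ) (hm : m ∈ Z) (k : ℕ) (hmk : m ∉ s k) : k < F m :=
    not_le.1 fun h => hmk ((hF m k h).2 hm.2)
  have hsecond (k : ℕ) : ∃ p ∈ Z, ∃ q ∈ Z, k ≤ p ∧ p < q := by
    obtain ⟨p, hp, hkp⟩ := hZinf.exists_gt k
    obtain ⟨q, hq, hpq⟩ := hZinf.exists_gt p
    exact ⟨p, hp, q, hq, hkp.le, hpq⟩
  choose p hp q hq hkp hpq using hsecond
  -- If `s k ∈ U` misses `m' ∈ Z`, then `m'` is the only point of `Z` in `[k, F m']`, so no index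
  -- `k' > q k` misses `m'` as well: `q k` is a second point of `Z` above `k`.
  refine ⟨q, fun N M M' hMM' hsparse hsU => ?_⟩
  obtain ⟨r, hr, hNr⟩ := hZinf.exists_gt N
  have hbad (m' : ℕ) (hm' : m' ∈ Z) (k : ℕ) (hk : k ∈ M ∪ M') (k' : ℕ) (hk' : k' ∈ M ∪ M')
      (hkk' : k < k') (hmk : m' ∉ s k) (hmk' : m' ∉ s k') : m' ≤ r := by
    by_contra! hrm
    have hkN : k < N := by
      by_contra! hNk
      have hqF : q k < F m' := (hsparse k hk k' hk' hNk hkk').trans (hlate m' hm' k' hmk')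
      rcases lt_or_ge (p k) m' with h | h
      · exact hmk (hdiag _ (hp k) m' hm' h k (hkp k) (hsU k hk))
      · exact (hZ₀diag m' hm'.1 (q k) (hq k).1 (h.trans_lt (hpq k))).2.not_gt hqF
    exact hmk (hdiag r hr m' hm' hrm k (by omega) (hsU k hk))
  by_contra! hboth
  refine Ultrafilter.infinite_of_mem_of_le_cofinite hcof (inter_mem
    (sdiff_mem hZ (U.compl_mem_iff_notMem.2 hboth.1))
    (sdiff_mem hZ (U.compl_mem_iff_notMem.2 hboth.2))) ((finite_Iic r).subset ?_)
  rintro m' ⟨⟨hm', hmM⟩, -, hmM'⟩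
  simp only [mem_iInter₂, not_forall] at hmM hmM'
  obtain ⟨k, hk, hmk⟩ := hmM
  obtain ⟨k', hk', hmk'⟩ := hmM'
  rcases (hMM'.ne_of_mem hk hk').lt_or_gt with h | h
  · exact hbad m' hm' k (Or.inl hk) k' (Or.inr hk') h hmk hmk'
  · exact hbad m' hm' k' (Or.inr hk') k (Or.inl hk) h hmk' hmk

theorem exists_mem_infinite_diagonal (hU : IsSelective U) {A : ℕ → Set ℕ} (hA : ∀ k, A k ∈ U)
    (G : ℕ → ℕ) :
    ∃ X ∈ U, ∃ K : Set ℕ, K.Infinite ∧ (∀ n ∈ X, ∀ k ∈ K, n ∈ A k ∨ G n < k) ∧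
      SparseAbove G 0 K := by
  rcases U.le_cofinite_or_eq_pure with hcof | ⟨n₀, rfl⟩
  · obtain ⟨Z, hZ, hZdiag⟩ := exists_diagonal hU hA G
    obtain ⟨X, hX, hXZ, K, hKZ, hK, hXK⟩ :
        ∃ X ∈ U, X ⊆ Z ∧ ∃ K ⊆ Z, K.Infinite ∧ Disjoint X K := by
      obtain ⟨t, htZ, ht, hZt⟩ :=
        (Ultrafilter.infinite_of_mem_of_le_cofinite hcof hZ).exists_infinite_sdiff
      by_cases htU : t ∈ U
      · exact ⟨t, htU, htZ, Z \ t, sdiff_subset, hZt, disjoint_sdiff_right⟩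
      · exact ⟨Z \ t, sdiff_mem hZ (U.compl_mem_iff_notMem.2 htU), sdiff_subset, t, htZ, ht,
          disjoint_sdiff_left⟩
    refine ⟨X, hX, K, hK, fun n hn k hk => ?_,
      fun k hk k' hk' _ hlt => (hZdiag k (hKZ hk) k' (hKZ hk') hlt).2⟩
    rcases lt_trichotomy k n with h | rfl | h
    · exact Or.inl ((hZdiag k (hKZ hk) n (hXZ hn) h).1 k le_rfl)
    · exact absurd rfl (hXK.ne_of_mem hn hk)
    · exact Or.inr (hZdiag n (hXZ hn) k (hKZ hk) h).2
  · obtain ⟨K, hK, hKge, hKsparse⟩ := exists_infinite_sparseAbove G (G n₀ + 1)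
    exact ⟨{n₀}, rfl, K, hK, fun n hn k hk => Or.inr (hn ▸ hKge hk), hKsparse⟩

end IsSelective

theorem mem_sumUF_of_mem_BV {E : Ultrafilter ℕ} {Vn : ℕ → Ultrafilter ℕ} {b : Set (ℕ × ℕ)}
    (hb : b ∈ BV E Vn) : b ∈ sumUF E Vn :=
  mem_sumUF.2 (mem_of_superset hb.1 fun n hn => hb.2 n hn)

theorem exists_mem_BV_subset {E : Ultrafilter ℕ} {Vn : ℕ → Ultrafilter ℕ} {a : Set (ℕ × ℕ)}
    (ha : a ∈ sumUF E Vn) : ∃ b ∈ BV E Vn, b ⊆ a := by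
  set b : Set (ℕ × ℕ) := {p | sect a p.1 ∈ Vn p.1 ∧ p ∈ a}
  have hb (n : ℕ) (hn : sect a n ∈ Vn n) : sect b n = sect a n :=
    ext fun m => ⟨fun h => h.2, fun h => ⟨hn, h⟩⟩
  refine ⟨b, ⟨mem_of_superset (mem_sumUF.1 ha) fun n hn => ?_, fun n hn => ?_⟩, fun p hp => hp.2⟩
  · change sect b n ≠ ∅
    rw [hb n hn]
    exact (Filter.nonempty_of_mem hn).ne_empty
  · obtain ⟨m, hm, -⟩ := nonempty_iff_ne_empty.2 hn
    exact hb n hm ▸ hm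

theorem inter_mem_BV {E : Ultrafilter ℕ} {Vn : ℕ → Ultrafilter ℕ} {b₀ b₁ : Set (ℕ × ℕ)}
    (h₀ : b₀ ∈ BV E Vn) (h₁ : b₁ ∈ BV E Vn) : b₀ ∩ b₁ ∈ BV E Vn := by
  have hsect (n : ℕ) (hn₀ : sect b₀ n ≠ ∅) (hn₁ : sect b₁ n ≠ ∅) : sect (b₀ ∩ b₁) n ∈ Vn n :=
    inter_mem (h₀.2 n hn₀) (h₁.2 n hn₁)
  refine ⟨mem_of_superset (inter_mem h₀.1 h₁.1) fun n hn => ?_, fun n hn => ?_⟩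
  · exact (Filter.nonempty_of_mem (hsect n hn.1 hn.2)).ne_empty
  · obtain ⟨m, hm₀, hm₁⟩ := nonempty_iff_ne_empty.2 hn
    exact hsect n (Set.Nonempty.ne_empty ⟨m, hm₀⟩) (Set.Nonempty.ne_empty ⟨m, hm₁⟩)

theorem exists_sect_mem_of_convergesTo {E : Ultrafilter ℕ} {Vn : ℕ → Ultrafilter ℕ}
    {b : ℕ → Set (ℕ × ℕ)} {c : Set (ℕ × ℕ)} (hb : ∀ k, b k ∈ BV E Vn) (hbc : ConvergesTo b c)
    {n : ℕ} (hn : sect c n ≠ ∅) : ∃ h, ∀ k, h ≤ k → sect (b k) n ∈ Vn n := by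
  obtain ⟨m, hm⟩ := nonempty_iff_ne_empty.2 hn
  obtain ⟨h, hh⟩ := hbc (n, m)
  exact ⟨h, fun k hk => (hb k).2 n (Set.Nonempty.ne_empty ⟨m, (hh k hk).2 hm⟩)⟩

theorem exists_infinite_iInter_mem_sumUF {E : Ultrafilter ℕ} {Vn : ℕ → Ultrafilter ℕ}
    (hE : IsSelective E) (hV : ∀ n, IsSelective (Vn n)) {b : ℕ → Set (ℕ × ℕ)}
    {c : Set (ℕ × ℕ)} (hb : ∀ k, b k ∈ BV E Vn) (hc : c ∈ BV E Vn) (hbc : ConvergesTo b c) :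
    ∃ M : Set ℕ, M.Infinite ∧ (⋂ k ∈ M, b k) ∈ sumUF E Vn := by
  obtain ⟨hP, hcV⟩ := hc
  choose! ζ hζ using fun n (hn : n ∈ {n | sect c n ≠ ∅}) =>
    IsSelective.exists_iInter_mem_or_iInter_mem (hV n) (hcV n hn) (hbc.sect n)
  choose! h₀ hh₀ using fun n (hn : n ∈ {n | sect c n ≠ ∅}) =>
    exists_sect_mem_of_convergesTo hb hbc hn
  obtain ⟨X, hX, K, hK, hXK, hKsparse⟩ := IsSelective.exists_mem_infinite_diagonal hE
    (A := fun k => {n | sect (b k) n ∈ Vn n}) (fun k => mem_sumUF.1 (mem_sumUF_of_mem_BV (hb k)))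
    (fun x => max (h₀ x) ((Finset.range (x + 1)).sup fun a => ζ a x))
  obtain ⟨M, hMK, hM, hKM⟩ := hK.exists_infinite_sdiff
  have hsplit : X ∩ {n | sect c n ≠ ∅} ⊆
      {n | sect (⋂ k ∈ M, b k) n ∈ Vn n} ∪ {n | sect (⋂ k ∈ K \ M, b k) n ∈ Vn n} := by
    rintro n ⟨hnX, hnP⟩
    simp only [mem_union, mem_ofPred_eq, sect_biInter]
    refine hζ n hnP n M (K \ M) disjoint_sdiff_right (fun k hk k' hk' hnk hkk' => ?_)
      (fun k hk => ?_) <;> rw [union_sdiff_cancel hMK] at hk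
    · rw [union_sdiff_cancel hMK] at hk'
      calc ζ n k ≤ (Finset.range (k + 1)).sup fun a => ζ a k :=
              Finset.le_sup (f := fun a => ζ a k) (Finset.mem_range.2 (Nat.lt_succ_of_le hnk))
          _ ≤ _ := le_max_right _ _
          _ < k' := hKsparse k hk k' hk' (Nat.zero_le k) hkk'
    · rcases hXK n hnX k hk with h | h
      exacts [h, hh₀ n hnP k ((le_max_left _ _).trans h.le)]
  rcases Ultrafilter.union_mem_iff.1 (mem_of_superset (inter_mem hX hP) hsplit) with h | h
  exacts [⟨M, hM, h⟩, ⟨K \ M, hKM, h⟩]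

theorem stmt16 (E : Ultrafilter ℕ) (Vn : ℕ → Ultrafilter ℕ)
    (hE : IsSelective E) (hV : ∀ n, IsSelective (Vn n)) :
    BasicallyGeneratedBy (sumUF E Vn) (BV E Vn) ∧
    ∀ b₀ ∈ BV E Vn, ∀ b₁ ∈ BV E Vn, b₀ ∩ b₁ ∈ BV E Vn :=
  ⟨⟨fun _ hb => mem_sumUF_of_mem_BV hb, fun _ ha => exists_mem_BV_subset ha,
    fun _ _ hb hc hbc => exists_infinite_iInter_mem_sumUF hE hV hb hc hbc⟩,
    fun _ h₀ _ h₁ => inter_mem_BV h₀ h₁⟩
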